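/- arXiv:2603.04345 — 6 statements merged into one kernel-verified Lean document; each statement's English description precedes it below -/
import Mathlib

section
/- If a generalized geometric rule φ^Γ satisfies scale invariance, then Γ(t) = t·Γ(1) for every t ≥ 0; consequently, setting γ = Γ(1) ∈ [0,1], the rule φ^Γ coincides with the geometric rule φ^γ. -/
open Finset

/-!  River pollution claims problems (Yang et al. / Martínez & Moreno-Ternero).

Agents are `Fin n`, ordered upstream (agent `0`) to downstream (agent `n-1`).  -/

/-- A rule candidate: for each population size `n` it maps a claims vector and a
budget to a vector of awards. -/
abbrev RuleFun : Type := (n : ℕ) → (Fin n → ℝ) → ℝ → (Fin n → ℝ)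

/-- `(c, E)` is a river pollution (abatement) problem: claims are nonnegative, the
aggregate claim `C = ∑ i, c i` is positive, and `0 ≤ E ≤ C`. -/
def IsProblem {n : ℕ} (c : Fin n → ℝ) (E : ℝ) : Prop :=
  (∀ i, 0 ≤ c i) ∧ 0 < ∑ i, c i ∧ 0 ≤ E ∧ E ≤ ∑ i, c i

/-- A redistribution problem: a problem whose budget equals the aggregate claim. -/
def IsRedistribution {n : ℕ} (c : Fin n → ℝ) (E : ℝ) : Prop :=
  IsProblem c E ∧ E = ∑ i, c i

/-- `φ` is a rule: on every problem it returns a nonnegative allocation exhausting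
the budget. -/
def IsRule (φ : RuleFun) : Prop :=
  ∀ (n : ℕ) (c : Fin n → ℝ) (E : ℝ), IsProblem c E →
    (∀ i, 0 ≤ φ n c E i) ∧ ∑ i, φ n c E i = E

/-- Budget additivity: if the budget comes in two installments `E = E' + E''`, the
allocation for `E` is the sum of the allocations for `E'` and `E''`. -/
def BudgetAdditive (φ : RuleFun) : Prop :=
  ∀ (n : ℕ) (c : Fin n → ℝ) (E E' E'' : ℝ), IsProblem c E →
    0 ≤ E' → 0 ≤ E'' → E = E' + E'' →
    φ n c E = fun i => φ n c E' i + φ n c E'' i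

/-- Scale invariance: rescaling claims and budget by `μ > 0` rescales the allocation. -/
def ScaleInvariant (φ : RuleFun) : Prop :=
  ∀ (n : ℕ) (c : Fin n → ℝ) (E μ : ℝ), IsProblem c E → 0 < μ →
    φ n (fun i => μ * c i) (μ * E) = fun i => μ * φ n c E i

/-- Upstream invariance: in redistribution problems, increasing the claim of agent `i`
does not change the awards of agents located strictly upstream of `i`. -/
def UpstreamInvariant (φ : RuleFun) : Prop :=
  ∀ (n : ℕ) (c d : Fin n → ℝ),
    IsRedistribution c (∑ i, c i) → IsRedistribution d (∑ i, d i) →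
    ∀ i : Fin n, c i < d i → (∀ j, j ≠ i → c j = d j) →
    ∀ k, k < i → φ n c (∑ i, c i) k = φ n d (∑ i, d i) k

/-- The claims vector whose only (single) polluter is agent `i`, with claim `E`. -/
def singleClaim {n : ℕ} (i : Fin n) (E : ℝ) : Fin n → ℝ :=
  fun k => if k = i then E else 0

/-- Equal treatment of equal single polluters: in the redistribution problems whose
claims vector is `E` times a standard basis vector, any two non-terminal single
polluters receive the same award. -/
def EqualTreatmentOfEqualSinglePolluters (φ : RuleFun) : Prop :=
  ∀ (n : ℕ), 2 ≤ n → ∀ E : ℝ, 0 < E → ∀ i j : Fin n,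
    (i : ℕ) < n - 1 → (j : ℕ) < n - 1 →
    φ n (singleClaim i E) E i = φ n (singleClaim j E) E j

/-- Equal treatment of equal claims: agents with equal claims receive equal awards. -/
def EqualTreatmentOfEqualClaims (φ : RuleFun) : Prop :=
  ∀ (n : ℕ) (c : Fin n → ℝ) (E : ℝ), IsProblem c E →
    ∀ i j : Fin n, c i = c j → φ n c E i = φ n c E j

/-- The reduced claims vector obtained when the most upstream agent leaves with
award `x`: the new first agent's claim is `c 1 + (c 0 - x)`, and the remaining
claims are unchanged. -/
def reducedClaims {n : ℕ} (c : Fin (n + 1) → ℝ) (x : ℝ) : Fin n → ℝ :=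
  fun k => c k.succ + if (k : ℕ) = 0 then c 0 - x else 0

/-- Top consistency: in a redistribution problem, if the most upstream agent leaves
with its award (not exceeding its claim), transferring its residual claim to its
successor, and the reduced pair is again a problem (hence a redistribution problem),
then the awards of the remaining agents are unchanged. -/
def TopConsistent (φ : RuleFun) : Prop :=
  ∀ (n : ℕ) (c : Fin (n + 2) → ℝ) (E : ℝ), IsRedistribution c E →
    φ (n + 2) c E 0 ≤ c 0 →
    IsProblem (reducedClaims c (φ (n + 2) c E 0)) (E - φ (n + 2) c E 0) →
    ∀ k : Fin (n + 1),
      φ (n + 2) c E k.succ =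
        φ (n + 1) (reducedClaims c (φ (n + 2) c E 0)) (E - φ (n + 2) c E 0) k

/-- (Full) additivity: the allocation is additive in claims-budget pairs. -/
def AdditiveRule (φ : RuleFun) : Prop :=
  ∀ (n : ℕ) (c d : Fin n → ℝ) (E E' : ℝ),
    IsProblem c E → IsProblem d E' → IsProblem (fun i => c i + d i) (E + E') →
    φ n (fun i => c i + d i) (E + E') = fun i => φ n c E i + φ n d E' i

/-- The elementary redistribution problem `u_n`: only the most upstream agent has a
(positive, unitary) claim; the budget is `1`. -/
def unitClaims (n : ℕ) : Fin n → ℝ := fun k => if (k : ℕ) = 0 then 1 else 0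

/-- Merging/splitting proofness: in the elementary problems `u_n`, merging two
adjacent agents `i, i+1` into a single agent (yielding `u_{n-1}`) does not change
their total award. -/
def MergingSplittingProof (φ : RuleFun) : Prop :=
  ∀ (m : ℕ) (i : Fin (m + 1)),
    φ (m + 2) (unitClaims (m + 2)) 1 i.castSucc
      + φ (m + 2) (unitClaims (m + 2)) 1 i.succ
      = φ (m + 1) (unitClaims (m + 1)) 1 i

/-- The proportional rule `φ^P`. -/
noncomputable def propAlloc : RuleFun :=
  fun _ c E i => c i * (E / ∑ j, c j)

/-- The full transfer rule `φ^FT`: the most downstream agent gets the whole budget. -/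
def ftAlloc : RuleFun :=
  fun n => fun _ E i => if (i : ℕ) = n - 1 then E else 0

/-- The averaging (externality-adjusted proportional) rule `φ^λ`. -/
noncomputable def avgAlloc (lam : ℝ) : RuleFun :=
  fun n c E i => lam * propAlloc n c E i + (1 - lam) * ftAlloc n c E i

/-- The (geometrically) augmented claim of agent `i` under parameter `γ`:
`c i + ∑_{k<i} (1-γ)^(i-k) * c k`. -/
noncomputable def geomShare (γ : ℝ) {n : ℕ} (c : Fin n → ℝ) (i : Fin n) : ℝ :=
  c i + ∑ k ∈ Finset.Iio i, (1 - γ) ^ ((i : ℕ) - (k : ℕ)) * c k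

/-- The geometric rule `φ^γ`: every non-terminal agent gets the fraction `γ` of its
augmented proportional share; the most downstream agent gets its full augmented
proportional share. -/
noncomputable def geomAlloc (γ : ℝ) : RuleFun :=
  fun n c E i =>
    (if (i : ℕ) = n - 1 then 1 else γ) * geomShare γ c i * (E / ∑ j, c j)

/-- A transfer function `Γ : ℝ₊ → ℝ₊` with `0 ≤ Γ(t) ≤ t`. -/
def IsTransferFunction (Γ : ℝ → ℝ) : Prop := ∀ t : ℝ, 0 ≤ t → 0 ≤ Γ t ∧ Γ t ≤ t

/-- `rGammaNat Γ c i = Γ (c i + ∑_{k<i} (c k - rGammaNat Γ c k))`: the recursively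
defined generalized geometric shares (of all non-terminal agents). -/
noncomputable def rGammaNat (Γ : ℝ → ℝ) (c : ℕ → ℝ) : ℕ → ℝ
  | i => Γ (c i + ∑ k : Fin i, (c k - rGammaNat Γ c k))
decreasing_by exact k.isLt

/-- Extension of a claims vector on `Fin n` to `ℕ` (by `0`). -/
def extendClaims {n : ℕ} (c : Fin n → ℝ) : ℕ → ℝ :=
  fun k => if h : k < n then c ⟨k, h⟩ else 0

/-- The shares `r^Γ_i(c)` of the generalized geometric rule: non-terminal agents get
`Γ(c i + ∑_{k<i}(c k − r_k))`, the most downstream agent gets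
`c i + ∑_{k<i}(c k − r_k)`. -/
noncomputable def genGeomShare (Γ : ℝ → ℝ) {n : ℕ} (c : Fin n → ℝ) (i : Fin n) : ℝ :=
  if (i : ℕ) = n - 1 then
    c i + ∑ k : Fin (i : ℕ), (extendClaims c k - rGammaNat Γ (extendClaims c) k)
  else rGammaNat Γ (extendClaims c) i

/-- The generalized geometric rule `φ^Γ`. -/
noncomputable def genGeomAlloc (Γ : ℝ → ℝ) : RuleFun :=
  fun _ c E i => genGeomShare Γ c i * (E / ∑ j, c j)


lemma rGammaNat_resid (Γ : ℝ → ℝ) (γ : ℝ) (hγ1 : γ ≤ 1)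
    (hΓγ : ∀ t : ℝ, 0 ≤ t → Γ t = γ * t)
    (d : ℕ → ℝ) (hd : ∀ k, 0 ≤ d k) (i : ℕ) :
    ∑ k : Fin i, (d k - rGammaNat Γ d k)
      = ∑ k : Fin i, (1 - γ) ^ (i - (k : ℕ)) * d k := by
  induction i with
  | zero => simp
  | succ i ih =>
    have hS : 0 ≤ ∑ k : Fin i, (1 - γ) ^ (i - (k : ℕ)) * d k :=
      Finset.sum_nonneg fun k _ => mul_nonneg (pow_nonneg (by linarith) _) (hd k)
    have hr : rGammaNat Γ d i
        = γ * (d i + ∑ k : Fin i, (1 - γ) ^ (i - (k : ℕ)) * d k) := by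
      rw [rGammaNat, ih]
      exact hΓγ _ (add_nonneg (hd i) hS)
    rw [Fin.sum_univ_castSucc, Fin.sum_univ_castSucc]
    simp only [Fin.coe_castSucc, Fin.val_last]
    rw [ih, hr]
    have hconv : ∑ k : Fin i, (1 - γ) ^ (i + 1 - (k : ℕ)) * d k
        = (1 - γ) * ∑ k : Fin i, (1 - γ) ^ (i - (k : ℕ)) * d k := by
      rw [Finset.mul_sum]
      refine Finset.sum_congr rfl fun k _ => ?_
      rw [show i + 1 - (k : ℕ) = (i - (k : ℕ)) + 1 by omega, pow_succ]
      ring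
    rw [hconv, show i + 1 - i = 1 by omega, pow_one]
    ring

lemma rGammaNat_linear (Γ : ℝ → ℝ) (γ : ℝ) (hγ1 : γ ≤ 1)
    (hΓγ : ∀ t : ℝ, 0 ≤ t → Γ t = γ * t)
    (d : ℕ → ℝ) (hd : ∀ k, 0 ≤ d k) (i : ℕ) :
    rGammaNat Γ d i
      = γ * (d i + ∑ k : Fin i, (1 - γ) ^ (i - (k : ℕ)) * d k) := by
  have hS : 0 ≤ ∑ k : Fin i, (1 - γ) ^ (i - (k : ℕ)) * d k :=
    Finset.sum_nonneg fun k _ => mul_nonneg (pow_nonneg (by linarith) _) (hd k)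
  rw [rGammaNat, rGammaNat_resid Γ γ hγ1 hΓγ d hd]
  exact hΓγ _ (add_nonneg (hd i) hS)

lemma sum_Iio_eq_fin_sum {n : ℕ} (c : Fin n → ℝ) (γ : ℝ) (i : Fin n) :
    ∑ k ∈ Finset.Iio i, (1 - γ) ^ ((i : ℕ) - (k : ℕ)) * c k
      = ∑ k : Fin (i : ℕ), (1 - γ) ^ ((i : ℕ) - (k : ℕ)) * extendClaims c k := by
  have h1 : ∀ k : Fin n, c k = extendClaims c (k : ℕ) := by
    intro k; simp [extendClaims]
  calc ∑ k ∈ Finset.Iio i, (1 - γ) ^ ((i : ℕ) - (k : ℕ)) * c k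
      = ∑ k ∈ (Finset.Iio i).map Fin.valEmbedding,
          (1 - γ) ^ ((i : ℕ) - k) * extendClaims c k := by
        rw [Finset.sum_map]
        exact Finset.sum_congr rfl fun k _ => by rw [h1 k]; rfl
    _ = ∑ k ∈ Finset.Iio (i : ℕ), (1 - γ) ^ ((i : ℕ) - k) * extendClaims c k := by
        rw [Fin.map_valEmbedding_Iio]
    _ = ∑ k : Fin (i : ℕ), (1 - γ) ^ ((i : ℕ) - (k : ℕ)) * extendClaims c k := by
        rw [Nat.Iio_eq_range, ← Fin.sum_univ_eq_sum_range]

/-- if a generalized geometric rule `φ^Γ` is scale invariant, then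
`Γ(t) = t·Γ(1)` for every `t ≥ 0`; consequently, with `γ = Γ(1) ∈ [0,1]`, the rule `φ^Γ`
coincides with the geometric rule `φ^γ`. -/
theorem scaleInvariant_genGeom_is_geometric (Γ : ℝ → ℝ) (hΓ : IsTransferFunction Γ)
    (hsc : ScaleInvariant (genGeomAlloc Γ)) :
    (∀ t : ℝ, 0 ≤ t → Γ t = t * Γ 1) ∧ Γ 1 ∈ Set.Icc (0 : ℝ) 1 ∧
      ∀ (n : ℕ) (c : Fin n → ℝ) (E : ℝ), IsProblem c E →
        genGeomAlloc Γ n c E = geomAlloc (Γ 1) n c E := by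
  have hΓ0 : Γ 0 = 0 := le_antisymm (hΓ 0 le_rfl).2 (hΓ 0 le_rfl).1
  -- Step 1: scale property of Γ from scale invariance on 2-agent problems
  have hscale : ∀ t : ℝ, 0 ≤ t → ∀ μ : ℝ, 0 < μ → Γ (μ * t) = μ * Γ t := by
    intro t ht μ hμ
    set c : Fin 2 → ℝ := fun i => if i = 0 then t else 1 with hc
    have hsum : ∑ j, c j = t + 1 := by simp [hc, Fin.sum_univ_two]
    have hP : IsProblem c (t + 1) := by
      refine ⟨fun i => ?_, ?_, by linarith, le_of_eq hsum.symm⟩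
      · by_cases h : i = 0 <;> simp [hc, h, ht]
      · rw [hsum]; linarith
    have key := congrFun (hsc 2 c (t + 1) μ hP hμ) 0
    have hsh : ∀ e : Fin 2 → ℝ, genGeomShare Γ e 0 = Γ (e 0) := by
      intro e
      have : rGammaNat Γ (extendClaims e) 0 = Γ (extendClaims e 0) := by
        rw [rGammaNat]; simp
      simp only [genGeomShare]
      norm_num
      rw [this]
      simp [extendClaims]
    simp only [genGeomAlloc, hsh] at key
    have hc0 : c 0 = t := by simp [hc]
    have hsum2 : ∑ j : Fin 2, μ * c j = μ * (t + 1) := by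
      rw [← Finset.mul_sum, hsum]
    rw [hsum2, hsum, hc0] at key
    have h1 : μ * (t + 1) / (μ * (t + 1)) = 1 := by
      rw [div_self]; positivity
    have h2 : (t + 1) / (t + 1) = 1 := by
      rw [div_self]; positivity
    rw [h1, h2] at key
    simpa using key
  have hlin : ∀ t : ℝ, 0 ≤ t → Γ t = t * Γ 1 := by
    intro t ht
    rcases eq_or_lt_of_le ht with h | h
    · rw [← h, hΓ0]; ring
    · have := hscale 1 zero_le_one t h
      rw [mul_one] at this; exact this
  have hγ0 : 0 ≤ Γ 1 := (hΓ 1 zero_le_one).1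
  have hγ1 : Γ 1 ≤ 1 := (hΓ 1 zero_le_one).2
  refine ⟨hlin, ⟨hγ0, hγ1⟩, ?_⟩
  intro n c E hP
  set γ := Γ 1 with hγdef
  have hΓγ : ∀ t : ℝ, 0 ≤ t → Γ t = γ * t := fun t ht => by
    rw [hlin t ht]; ring
  funext i
  have hd : ∀ k, 0 ≤ extendClaims c k := by
    intro k
    unfold extendClaims
    split
    · exact hP.1 _
    · exact le_rfl
  have hdc : extendClaims c (i : ℕ) = c i := by simp [extendClaims]
  have hshare : genGeomShare Γ c i
      = (if (i : ℕ) = n - 1 then 1 else γ) * geomShare γ c i := by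
    unfold genGeomShare geomShare
    by_cases h : (i : ℕ) = n - 1
    · rw [if_pos h, if_pos h, one_mul,
        rGammaNat_resid Γ γ hγ1 hΓγ _ hd, sum_Iio_eq_fin_sum]
    · rw [if_neg h, if_neg h,
        rGammaNat_linear Γ γ hγ1 hΓγ _ hd, sum_Iio_eq_fin_sum, hdc]
  unfold genGeomAlloc geomAlloc
  rw [hshare]
end

section
/- For every function Γ: ℝ_+ → ℝ_+ with 0 ≤ Γ(t) ≤ t for all t, the generalized geometric rule φ^Γ is a well-defined rule: for every problem (c,E), one has r^Γ_i(c) ≥ 0 for every agent i, Σ_{i=1}^n r^Γ_i(c) = C, and hence φ^Γ_i(c,E) ≥ 0 for every i and Σ_{i=1}^n φ^Γ_i(c,E) = E. -/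
open Finset

/-- Aggregate residual `t i = c i + ∑_{k<i} (c k - r k)`. -/
noncomputable def tGammaNat (Γ : ℝ → ℝ) (c : ℕ → ℝ) (i : ℕ) : ℝ :=
  c i + ∑ k : Fin i, (c k - rGammaNat Γ c k)

lemma rGammaNat_eq (Γ : ℝ → ℝ) (c : ℕ → ℝ) (i : ℕ) :
    rGammaNat Γ c i = Γ (tGammaNat Γ c i) := by
  rw [rGammaNat, tGammaNat]

lemma tGammaNat_succ (Γ : ℝ → ℝ) (c : ℕ → ℝ) (i : ℕ) :
    tGammaNat Γ c (i + 1) = c (i + 1) + (tGammaNat Γ c i - rGammaNat Γ c i) := by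
  simp only [tGammaNat, Fin.sum_univ_castSucc, Fin.coe_castSucc, Fin.val_last]
  ring

lemma tGammaNat_nonneg (Γ : ℝ → ℝ) (hΓ : IsTransferFunction Γ) (c : ℕ → ℝ)
    (hc : ∀ k, 0 ≤ c k) : ∀ i, 0 ≤ tGammaNat Γ c i ∧ 0 ≤ rGammaNat Γ c i ∧
      rGammaNat Γ c i ≤ tGammaNat Γ c i := by
  intro i
  induction i with
  | zero =>
    have ht : 0 ≤ tGammaNat Γ c 0 := by simpa [tGammaNat] using hc 0
    exact ⟨ht, by rw [rGammaNat_eq]; exact (hΓ _ ht).1, by rw [rGammaNat_eq]; exact (hΓ _ ht).2⟩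
  | succ n ih =>
    have ht : 0 ≤ tGammaNat Γ c (n + 1) := by
      rw [tGammaNat_succ]
      have := ih.2.2
      have := hc (n + 1)
      linarith
    exact ⟨ht, by rw [rGammaNat_eq]; exact (hΓ _ ht).1, by rw [rGammaNat_eq]; exact (hΓ _ ht).2⟩

lemma extendClaims_nonneg {n : ℕ} (c : Fin n → ℝ) (hc : ∀ i, 0 ≤ c i) :
    ∀ k, 0 ≤ extendClaims c k := by
  intro k
  unfold extendClaims
  split
  · exact hc _
  · exact le_refl 0

lemma genGeomShare_nonneg (Γ : ℝ → ℝ) (hΓ : IsTransferFunction Γ) {n : ℕ}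
    (c : Fin n → ℝ) (hc : ∀ i, 0 ≤ c i) (i : Fin n) : 0 ≤ genGeomShare Γ c i := by
  have h := tGammaNat_nonneg Γ hΓ (extendClaims c) (extendClaims_nonneg c hc)
  unfold genGeomShare
  split
  · have ht := (h i).1
    have hce : (c i : ℝ) = extendClaims c i := by
      simp [extendClaims, i.isLt]
    rw [hce]
    exact ht
  · exact (h i).2.1

lemma genGeomShare_sum (Γ : ℝ → ℝ) {n : ℕ} (c : Fin (n + 1) → ℝ) :
    ∑ i, genGeomShare Γ c i = ∑ i, c i := by
  rw [Fin.sum_univ_castSucc (f := fun i => genGeomShare Γ c i),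
    Fin.sum_univ_castSucc (f := fun i => c i)]
  have hlast : genGeomShare Γ c (Fin.last n)
      = c (Fin.last n) + ∑ k : Fin n, (extendClaims c k - rGammaNat Γ (extendClaims c) k) := by
    simp [genGeomShare]
  have hcast : ∀ i : Fin n, genGeomShare Γ c i.castSucc
      = rGammaNat Γ (extendClaims c) i := by
    intro i
    have : (i : ℕ) ≠ n := Nat.ne_of_lt i.isLt
    simp [genGeomShare, this]
  have hce : ∀ k : Fin n, extendClaims c (k : ℕ) = c k.castSucc := by
    intro k
    simp [extendClaims, Nat.lt_succ_of_lt k.isLt, Fin.castSucc]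
    congr 1
  rw [hlast]
  simp only [hcast]
  rw [Finset.sum_sub_distrib]
  have : ∑ k : Fin n, extendClaims c (k : ℕ) = ∑ k : Fin n, c k.castSucc :=
    Finset.sum_congr rfl fun k _ => hce k
  rw [this]
  ring

/-- for every transfer function `Γ`, the generalized geometric rule is
well defined: the shares `r^Γ_i(c)` are nonnegative and sum to the aggregate claim, hence
`φ^Γ(c,E)` is a nonnegative allocation exhausting the budget. -/
theorem genGeom_well_defined (Γ : ℝ → ℝ) (hΓ : IsTransferFunction Γ) :
    ∀ (n : ℕ) (c : Fin n → ℝ) (E : ℝ), IsProblem c E →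
      (∀ i, 0 ≤ genGeomShare Γ c i) ∧ (∑ i, genGeomShare Γ c i = ∑ i, c i) ∧
        (∀ i, 0 ≤ genGeomAlloc Γ n c E i) ∧ ∑ i, genGeomAlloc Γ n c E i = E := by
  intro n c E hP
  obtain ⟨hc, hC, hE0, hEC⟩ := hP
  have hsum : ∑ i, genGeomShare Γ c i = ∑ i, c i := by
    cases n with
    | zero => simp
    | succ m => exact genGeomShare_sum Γ c
  have hnn : ∀ i, 0 ≤ genGeomShare Γ c i := genGeomShare_nonneg Γ hΓ c hc
  refine ⟨hnn, hsum, ?_, ?_⟩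
  · intro i
    exact mul_nonneg (hnn i) (div_nonneg hE0 hC.le)
  · unfold genGeomAlloc
    rw [← Finset.sum_mul, hsum, mul_comm, div_mul_cancel₀ _ hC.ne']
end

section
/- If a rule φ satisfies upstream invariance, equal treatment of equal claims and top consistency, then for every redistribution problem (c,E) (i.e., every problem with E = C) and every agent i, φ_i(c,E) = c_i; that is, φ coincides with the proportional rule on the domain of redistribution problems. -/
open Finset

section Aux

variable {φ : RuleFun}

private lemma isRedist_of {n : ℕ} (c : Fin n → ℝ) (hc : ∀ i, 0 ≤ c i)
    (hs : 0 < ∑ i, c i) : IsRedistribution c (∑ i, c i) :=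
  ⟨⟨hc, hs, hs.le, le_refl _⟩, rfl⟩

private lemma sum_pos_anchor {n : ℕ} {c : Fin n → ℝ} (hc : ∀ i, 0 ≤ c i)
    (p : Fin n) (hp : 0 < c p) : 0 < ∑ i, c i :=
  lt_of_lt_of_le hp (Finset.single_le_sum (fun i _ => hc i) (Finset.mem_univ p))

private lemma lemB (h1 : UpstreamInvariant φ) :
    ∀ (m N : ℕ) (c d : Fin (N + 2) → ℝ),
      (Finset.univ.filter (fun j => c j ≠ d j)).card ≤ m →
      (∀ i, 0 ≤ c i) → (∀ i, 0 ≤ d i) →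
      ∀ p : Fin (N + 2), c p = d p → 0 < c p → c 0 = d 0 →
      φ (N + 2) c (∑ i, c i) 0 = φ (N + 2) d (∑ i, d i) 0 := by
  intro m
  induction m with
  | zero =>
    intro N c d hcard _ _ p _ _ _
    have hcd : c = d := by
      funext j
      by_contra hj
      have : j ∈ Finset.univ.filter (fun j => c j ≠ d j) := by
        simp [hj]
      have := Finset.card_pos.mpr ⟨j, this⟩
      omega
    rw [hcd]
  | succ m ih =>
    intro N c d hcard hc hd p hpcd hp h0
    by_cases hS : (Finset.univ.filter (fun j => c j ≠ d j)).card = 0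
    · have hcd : c = d := by
        funext j
        by_contra hj
        have : j ∈ Finset.univ.filter (fun j => c j ≠ d j) := by simp [hj]
        have := Finset.card_pos.mpr ⟨j, this⟩
        omega
      rw [hcd]
    · obtain ⟨j, hjmem⟩ := Finset.card_pos.mp (Nat.pos_of_ne_zero hS)
      have hj : c j ≠ d j := by simpa using hjmem
      have hj0 : j ≠ 0 := fun h => hj (h ▸ h0)
      have hjp : j ≠ p := fun h => hj (h ▸ hpcd)
      set c' := Function.update c j (d j) with hc'def
      have hc' : ∀ i, 0 ≤ c' i := by
        intro i
        rcases eq_or_ne i j with rfl | h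
        · simp [hc'def, hd i]
        · simp [hc'def, Function.update_of_ne h, hc i]
      have hc'p : c' p = c p := Function.update_of_ne (Ne.symm hjp) _ _
      have hcpos : 0 < ∑ i, c i := sum_pos_anchor hc p hp
      have hc'pos : 0 < ∑ i, c' i := sum_pos_anchor hc' p (hc'p ▸ hp)
      have hjpos : (0 : Fin (N + 2)) < j := Fin.pos_of_ne_zero hj0
      have step1 : φ (N + 2) c (∑ i, c i) 0 = φ (N + 2) c' (∑ i, c' i) 0 := by
        rcases lt_or_gt_of_ne hj with hlt | hgt
        · exact h1 (N + 2) c c' (isRedist_of c hc hcpos) (isRedist_of c' hc' hc'pos)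
            j (by simpa [hc'def] using hlt)
            (fun k hk => (Function.update_of_ne hk _ _).symm) 0 hjpos
        · exact (h1 (N + 2) c' c (isRedist_of c' hc' hc'pos) (isRedist_of c hc hcpos)
            j (by simpa [hc'def] using hgt)
            (fun k hk => Function.update_of_ne hk _ _) 0 hjpos).symm
      have hsub : (Finset.univ.filter (fun k => c' k ≠ d k)) ⊆
          (Finset.univ.filter (fun k => c k ≠ d k)).erase j := by
        intro k hk
        have hk' : c' k ≠ d k := by simpa using hk
        have hkj : k ≠ j := by
          intro h
          apply hk'
          simp [h, hc'def]
        rw [Finset.mem_erase]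
        refine ⟨hkj, ?_⟩
        simp only [Finset.mem_filter, Finset.mem_univ, true_and]
        rwa [hc'def, Function.update_of_ne hkj] at hk'
      have hcard' : (Finset.univ.filter (fun k => c' k ≠ d k)).card ≤ m := by
        have h1' := Finset.card_le_card hsub
        have h2' := Finset.card_erase_of_mem hjmem
        omega
      have step2 : φ (N + 2) c' (∑ i, c' i) 0 = φ (N + 2) d (∑ i, d i) 0 := by
        refine ih N c' d hcard' hc' hd p (by rw [hc'p, hpcd]) (hc'p ▸ hp) ?_
        rw [hc'def, Function.update_of_ne (Ne.symm hj0), h0]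
      rw [step1, step2]

private lemma lemA (h1 : UpstreamInvariant φ) (N : ℕ) (c d : Fin (N + 2) → ℝ)
    (hc : ∀ i, 0 ≤ c i) (hd : ∀ i, 0 ≤ d i)
    (hcs : 0 < ∑ i, c i) (hds : 0 < ∑ i, d i) (h0 : c 0 = d 0) :
    φ (N + 2) c (∑ i, c i) 0 = φ (N + 2) d (∑ i, d i) 0 := by
  set q : Fin (N + 2) := ⟨1, by omega⟩ with hq
  have hq0 : q ≠ 0 := by simp [hq, Fin.ext_iff]
  have hqpos : (0 : Fin (N + 2)) < q := Fin.pos_of_ne_zero hq0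
  set B : ℝ := c q + d q + 1 with hB
  have hBc : c q < B := by have := hd q; simp [hB]; linarith
  have hBd : d q < B := by have := hc q; simp [hB]; linarith
  have hBpos : 0 < B := by have := hc q; have := hd q; simp [hB]; linarith
  set c' := Function.update c q B with hc'def
  set d' := Function.update d q B with hd'def
  have hc' : ∀ i, 0 ≤ c' i := by
    intro i
    rcases eq_or_ne i q with rfl | h
    · simp [hc'def, hBpos.le]
    · simp [hc'def, Function.update_of_ne h, hc i]
  have hd' : ∀ i, 0 ≤ d' i := by
    intro i
    rcases eq_or_ne i q with rfl | h
    · simp [hd'def, hBpos.le]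
    · simp [hd'def, Function.update_of_ne h, hd i]
  have hc'q : c' q = B := by simp [hc'def]
  have hd'q : d' q = B := by simp [hd'def]
  have hc's : 0 < ∑ i, c' i := sum_pos_anchor hc' q (hc'q ▸ hBpos)
  have hd's : 0 < ∑ i, d' i := sum_pos_anchor hd' q (hd'q ▸ hBpos)
  have step1 : φ (N + 2) c (∑ i, c i) 0 = φ (N + 2) c' (∑ i, c' i) 0 :=
    h1 (N + 2) c c' (isRedist_of c hc hcs) (isRedist_of c' hc' hc's)
      q (by simpa [hc'def] using hBc)
      (fun k hk => (Function.update_of_ne hk _ _).symm) 0 hqpos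
  have step3 : φ (N + 2) d (∑ i, d i) 0 = φ (N + 2) d' (∑ i, d' i) 0 :=
    h1 (N + 2) d d' (isRedist_of d hd hds) (isRedist_of d' hd' hd's)
      q (by simpa [hd'def] using hBd)
      (fun k hk => (Function.update_of_ne hk _ _).symm) 0 hqpos
  have step2 : φ (N + 2) c' (∑ i, c' i) 0 = φ (N + 2) d' (∑ i, d' i) 0 := by
    refine lemB h1 (Finset.univ.filter (fun j => c' j ≠ d' j)).card N c' d'
      (le_refl _) hc' hd' q (by rw [hc'q, hd'q]) (hc'q ▸ hBpos) ?_
    rw [hc'def, hd'def, Function.update_of_ne (Ne.symm hq0),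
      Function.update_of_ne (Ne.symm hq0), h0]
  rw [step1, step2, step3]

private lemma lemPos (hφ : IsRule φ) (h1 : UpstreamInvariant φ)
    (h2 : EqualTreatmentOfEqualClaims φ) (N : ℕ) (c : Fin (N + 2) → ℝ)
    (hc : ∀ i, 0 ≤ c i) (hs : 0 < ∑ i, c i) (h0 : 0 < c 0) :
    φ (N + 2) c (∑ i, c i) 0 = c 0 := by
  set d : Fin (N + 2) → ℝ := fun _ => c 0 with hd
  have hdnn : ∀ i, 0 ≤ d i := fun i => h0.le
  have hdsum : ∑ i, d i = (N + 2 : ℝ) * c 0 := by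
    simp [hd, Finset.sum_const, mul_comm]
  have hdpos : 0 < ∑ i, d i := by
    rw [hdsum]; positivity
  have hA : φ (N + 2) c (∑ i, c i) 0 = φ (N + 2) d (∑ i, d i) 0 :=
    lemA h1 N c d hc hdnn hs hdpos rfl
  have hprob : IsProblem d (∑ i, d i) := ⟨hdnn, hdpos, hdpos.le, le_refl _⟩
  have hete : ∀ i : Fin (N + 2), φ (N + 2) d (∑ i, d i) i = φ (N + 2) d (∑ i, d i) 0 :=
    fun i => h2 (N + 2) d (∑ i, d i) hprob i 0 rfl
  have hsum : ∑ i, φ (N + 2) d (∑ i, d i) i = ∑ i, d i :=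
    (hφ (N + 2) d (∑ i, d i) hprob).2
  have hsum2 : (N + 2 : ℝ) * φ (N + 2) d (∑ i, d i) 0 = (N + 2 : ℝ) * c 0 := by
    have e1 : ∑ i, φ (N + 2) d (∑ i, d i) i
        = (N + 2 : ℝ) * φ (N + 2) d (∑ i, d i) 0 := by
      rw [Finset.sum_congr rfl (fun i _ => hete i), Finset.sum_const,
        Finset.card_univ, Fintype.card_fin, nsmul_eq_mul]
      push_cast
      ring
    rw [← e1, hsum, hdsum]
  have hN : (N + 2 : ℝ) ≠ 0 := by positivity
  have hfin := mul_left_cancel₀ hN hsum2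
  rw [hA, hfin]

private lemma lemZero (hφ : IsRule φ) (h1 : UpstreamInvariant φ)
    (h2 : EqualTreatmentOfEqualClaims φ) (h3 : TopConsistent φ)
    (N : ℕ) (c : Fin (N + 2) → ℝ)
    (hc : ∀ i, 0 ≤ c i) (hs : 0 < ∑ i, c i) (h0 : c 0 = 0) :
    φ (N + 2) c (∑ i, c i) 0 = 0 := by
  set d : Fin (N + 2) → ℝ := fun k => if (k : ℕ) = 0 then 0 else 1 with hd
  have hdnn : ∀ i, 0 ≤ d i := by
    intro i; simp only [hd]; split <;> norm_num
  have hds : ∑ i, d i = (N + 1 : ℝ) := by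
    rw [Fin.sum_univ_succ]
    simp [hd, Fin.val_succ]
  have hdpos : 0 < ∑ i, d i := by rw [hds]; positivity
  set e : Fin (N + 3) → ℝ := fun k => if (k : ℕ) = 1 then 0 else 1 with he
  have henn : ∀ i, 0 ≤ e i := by
    intro i; simp only [he]; split <;> norm_num
  have he0 : e 0 = 1 := by simp [he]
  have hes : ∑ i, e i = (N + 2 : ℝ) := by
    rw [Fin.sum_univ_succ, Fin.sum_univ_succ]
    simp [he, Fin.val_succ]
    ring
  have hespos : 0 < ∑ i, e i := by rw [hes]; positivity
  have heprob : IsProblem e (∑ i, e i) := ⟨henn, hespos, hespos.le, le_refl _⟩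
  have hNnn : (0 : ℝ) ≤ N := Nat.cast_nonneg N
  have hpos0 : φ (N + 3) e (∑ i, e i) 0 = 1 := by
    have := lemPos hφ h1 h2 (N + 1) e henn hespos (by rw [he0]; norm_num)
    rw [this, he0]
  have hre : reducedClaims e 1 = d := by
    funext k
    simp only [reducedClaims, hd, he, Fin.val_succ]
    rcases eq_or_ne (k : ℕ) 0 with h | h
    · simp [h]
    · simp [h]
  have hle : φ (N + 3) e (∑ i, e i) 0 ≤ e 0 := by rw [hpos0, he0]
  have hrp : IsProblem (reducedClaims e (φ (N + 3) e (∑ i, e i) 0))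
      ((∑ i, e i) - φ (N + 3) e (∑ i, e i) 0) := by
    rw [hpos0, hre, hes]
    refine ⟨hdnn, hdpos, by linarith, by rw [hds]; linarith⟩
  have key : φ (N + 3) e (∑ i, e i) ((0 : Fin (N + 2)).succ)
      = φ (N + 2) (reducedClaims e (φ (N + 3) e (∑ i, e i) 0))
          ((∑ i, e i) - φ (N + 3) e (∑ i, e i) 0) 0 :=
    h3 (N + 1) e (∑ i, e i) (isRedist_of e henn hespos) hle hrp 0
  have hete2 : ∀ k : Fin (N + 1),
      φ (N + 3) e (∑ i, e i) k.succ.succ = 1 := by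
    intro k
    have := h2 (N + 3) e (∑ i, e i) heprob k.succ.succ 0
      (by simp [he, Fin.val_succ])
    rw [this, hpos0]
  have htail : ∑ k : Fin (N + 1), φ (N + 3) e (∑ i, e i) k.succ.succ = (N + 1 : ℝ) := by
    rw [Finset.sum_congr rfl (fun k _ => hete2 k), Finset.sum_const,
      Finset.card_univ, Fintype.card_fin, nsmul_eq_mul]
    push_cast; ring
  have gen : ∀ f : Fin (N + 3) → ℝ, ∑ i, f i
      = f 0 + (f ((0 : Fin (N + 2)).succ) + ∑ k : Fin (N + 1), f k.succ.succ) := by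
    intro f
    rw [Fin.sum_univ_succ, Fin.sum_univ_succ]
  have hsum : ∑ i, φ (N + 3) e (∑ i, e i) i = ∑ i, e i :=
    (hφ (N + 3) e (∑ i, e i) heprob).2
  rw [gen (fun i => φ (N + 3) e (∑ i, e i) i)] at hsum
  rw [hpos0, htail] at hsum
  have hX : φ (N + 3) e (∑ i, e i) ((0 : Fin (N + 2)).succ) = 0 := by
    have := hes
    linarith
  rw [hpos0, hre] at key
  have hb : (∑ i, e i) - 1 = ∑ i, d i := by rw [hes, hds]; ring
  rw [hb] at key
  have hd0 : φ (N + 2) d (∑ i, d i) 0 = 0 := by rw [← key]; exact hX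
  have hA := lemA h1 N c d hc hdnn hs hdpos (by rw [h0]; simp [hd])
  rw [hA, hd0]

end Aux

/-- Step I of Theorem 3: a rule satisfying upstream invariance, equal
treatment of equal claims and top consistency awards every agent exactly its claim in
every redistribution problem, i.e. it coincides there with the proportional rule. -/
theorem proportional_on_redistribution (φ : RuleFun) (hφ : IsRule φ)
    (h1 : UpstreamInvariant φ) (h2 : EqualTreatmentOfEqualClaims φ)
    (h3 : TopConsistent φ) :
    ∀ (n : ℕ) (c : Fin n → ℝ) (E : ℝ), IsRedistribution c E →
      ∀ i : Fin n, φ n c E i = c i := by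
  intro n
  induction n with
  | zero => intro c E _ i; exact i.elim0
  | succ m ih =>
    intro c E hred i
    obtain ⟨⟨hc, hspos, _hb1, _hb2⟩, hE⟩ := hred
    subst hE
    cases m with
    | zero =>
      have hsum := (hφ 1 c (∑ i, c i) ⟨hc, hspos, hspos.le, le_refl _⟩).2
      have hi : i = 0 := Fin.eq_zero i
      subst hi
      rw [Fin.sum_univ_one] at hsum
      rw [hsum, Fin.sum_univ_one]
    | succ N =>
      have h0 : φ (N + 2) c (∑ i, c i) 0 = c 0 := by
        rcases lt_or_eq_of_le (hc 0) with h | h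
        · exact lemPos hφ h1 h2 N c hc hspos h
        · rw [lemZero hφ h1 h2 h3 N c hc hspos h.symm, ← h]
      have hsplit : ∑ i, c i = c 0 + ∑ k : Fin (N + 1), c k.succ :=
        Fin.sum_univ_succ c
      have hrc : reducedClaims c (c 0) = fun k => c k.succ := by
        funext k
        unfold reducedClaims
        split_ifs <;> ring
      rcases lt_or_eq_of_le (Finset.sum_nonneg (fun k _ => hc k.succ) :
          (0 : ℝ) ≤ ∑ k : Fin (N + 1), c k.succ) with hT | hT
      · -- positive tail: use top consistency and the induction hypothesis
        have hrp : IsProblem (reducedClaims c (φ (N + 2) c (∑ i, c i) 0))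
            ((∑ i, c i) - φ (N + 2) c (∑ i, c i) 0) := by
          rw [h0, hrc]
          refine ⟨fun k => hc k.succ, hT, ?_, ?_⟩
          · rw [hsplit]; linarith
          · rw [hsplit]; linarith
        have hredd : IsRedistribution (reducedClaims c (φ (N + 2) c (∑ i, c i) 0))
            ((∑ i, c i) - φ (N + 2) c (∑ i, c i) 0) := by
          refine ⟨hrp, ?_⟩
          rw [h0, hrc, hsplit]
          ring
        have key := h3 N c (∑ i, c i) ⟨⟨hc, hspos, hspos.le, le_refl _⟩, rfl⟩
          (le_of_eq h0) hrp
        cases i using Fin.cases with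
        | zero => exact h0
        | succ k =>
          rw [key k, ih _ _ hredd k, h0, hrc]
      · -- zero tail: all downstream claims and awards vanish
        have hzero : ∀ k : Fin (N + 1), c k.succ = 0 := by
          intro k
          have := (Finset.sum_eq_zero_iff_of_nonneg
            (fun k _ => hc k.succ)).mp hT.symm k (Finset.mem_univ k)
          simpa using this
        have hsum := (hφ (N + 2) c (∑ i, c i) ⟨hc, hspos, hspos.le, le_refl _⟩).2
        have hnn := (hφ (N + 2) c (∑ i, c i) ⟨hc, hspos, hspos.le, le_refl _⟩).1
        have hexp : φ (N + 2) c (∑ i, c i) 0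
            + ∑ k : Fin (N + 1), φ (N + 2) c (∑ i, c i) k.succ = ∑ i, c i :=
          (Fin.sum_univ_succ _).symm.trans hsum
        have htail0 : ∑ k : Fin (N + 1), φ (N + 2) c (∑ i, c i) k.succ = 0 := by
          linarith [hexp, hsplit, hT, h0]
        have hall : ∀ k : Fin (N + 1), φ (N + 2) c (∑ i, c i) k.succ = 0 := by
          intro k
          have := (Finset.sum_eq_zero_iff_of_nonneg
            (fun k _ => hnn k.succ)).mp htail0 k (Finset.mem_univ k)
          simpa using this
        cases i using Fin.cases with
        | zero => exact h0
        | succ k => rw [hall k, hzero k]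
end

section
/- A geometric rule φ^γ satisfies merging/splitting proofness if and only if γ ∈ {0, 1}; that is, the full-transfer rule and the proportional rule are the only geometric rules satisfying merging/splitting proofness. -/
open Finset

lemma sum_unitClaims (n : ℕ) (hn : n ≠ 0) : ∑ i, unitClaims n i = 1 := by
  obtain ⟨m, rfl⟩ := Nat.exists_eq_succ_of_ne_zero hn
  unfold unitClaims
  have : ∀ i : Fin (m+1), ((i : ℕ) = 0) = (i = 0) := by
    intro i; exact propext Fin.val_eq_zero_iff
  simp only [this]
  simp

lemma geomShare_unit (γ : ℝ) (n : ℕ) (hn : n ≠ 0) (i : Fin n) :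
    geomShare γ (unitClaims n) i = (1-γ)^(i:ℕ) := by
  obtain ⟨m, rfl⟩ := Nat.exists_eq_succ_of_ne_zero hn
  unfold geomShare unitClaims
  rcases eq_or_ne i 0 with h | h
  · subst h
    rw [Finset.sum_eq_zero]
    · simp
    · intro k hk
      exact absurd (Finset.mem_Iio.mp hk) (Fin.not_lt_zero k)
  · have hi : (i : ℕ) ≠ 0 := fun h' => h (Fin.val_eq_zero_iff.mp h')
    have h0 : (0 : Fin (m+1)) ∈ Finset.Iio i := by
      simp [Fin.pos_iff_ne_zero, h]
    rw [if_neg hi]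
    rw [Finset.sum_eq_single_of_mem 0 h0]
    · simp
    · intro b _ hb
      have : (b : ℕ) ≠ 0 := fun h' => hb (Fin.val_eq_zero_iff.mp h')
      simp [this]

lemma geomAlloc_unit (γ : ℝ) (n : ℕ) (hn : n ≠ 0) (i : Fin n) :
    geomAlloc γ n (unitClaims n) 1 i
      = (if (i : ℕ) = n - 1 then 1 else γ) * (1-γ)^(i:ℕ) := by
  unfold geomAlloc
  rw [sum_unitClaims n hn, geomShare_unit γ n hn]
  norm_num

/-- a geometric rule `φ^γ` satisfies merging/splitting proofness iff
`γ ∈ {0,1}`, i.e. iff it is the full-transfer rule or the proportional rule. -/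
theorem geom_mergingSplittingProof_iff (γ : ℝ) (hγ : γ ∈ Set.Icc (0 : ℝ) 1) :
    MergingSplittingProof (geomAlloc γ) ↔ γ = 0 ∨ γ = 1 := by
  constructor
  · intro h
    have key := h 1 0
    rw [show ((0 : Fin 2).castSucc) = (0 : Fin 3) from rfl,
        show ((0 : Fin 2).succ) = (1 : Fin 3) from rfl] at key
    rw [geomAlloc_unit γ (1+2) (by norm_num), geomAlloc_unit γ (1+2) (by norm_num),
        geomAlloc_unit γ (1+1) (by norm_num)] at key
    simp at key
    rcases key with h0 | h1
    · exact Or.inl h0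
    · exact Or.inr (by linarith)
  · intro h
    intro m i
    rw [geomAlloc_unit γ (m+2) (by omega), geomAlloc_unit γ (m+2) (by omega),
        geomAlloc_unit γ (m+1) (by omega)]
    have hc : ((i.castSucc : Fin (m+2)) : ℕ) = (i : ℕ) := rfl
    have hs : ((i.succ : Fin (m+2)) : ℕ) = (i : ℕ) + 1 := rfl
    rw [hc, hs]
    have hle : (i : ℕ) ≤ m := Nat.lt_succ_iff.mp i.isLt
    have e1 : (m + 2 : ℕ) - 1 = m + 1 := by omega
    have e2 : (m + 1 : ℕ) - 1 = m := by omega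
    rw [e1, e2]
    rcases h with rfl | rfl
    · have h1 : (i : ℕ) ≠ m + 1 := by omega
      have h2 : ((i : ℕ) + 1 = m + 1) ↔ ((i : ℕ) = m) := by omega
      simp [h1, h2]
    · simp [pow_succ]
end

section
/- An averaging rule φ^λ satisfies top consistency if and only if λ ∈ {0, 1}; that is, the full-transfer rule and the proportional rule are the only averaging rules satisfying top consistency. -/
open Finset

/-- an averaging rule `φ^λ` satisfies top consistency iff
`λ ∈ {0,1}`, i.e. iff it is the full-transfer rule or the proportional rule. -/
theorem avg_topConsistent_iff (lam : ℝ) (hlam : lam ∈ Set.Icc (0 : ℝ) 1) :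
    TopConsistent (avgAlloc lam) ↔ lam = 0 ∨ lam = 1 := by
  obtain ⟨hl0, hl1⟩ := hlam
  constructor
  · intro hTC
    by_contra h
    push_neg at h
    obtain ⟨h0, h1⟩ := h
    set c : Fin 3 → ℝ := fun _ => 1 with hc
    have hphi0 : avgAlloc lam 3 c 3 0 = lam := by
      simp [avgAlloc, propAlloc, ftAlloc, hc, Fin.sum_univ_three]
    have hred : IsRedistribution c 3 := by
      refine ⟨⟨fun i => by norm_num [hc], ?_, by norm_num, ?_⟩, ?_⟩ <;>
        simp [hc, Fin.sum_univ_three] <;> norm_num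
    have hle : avgAlloc lam 3 c 3 0 ≤ c 0 := by rw [hphi0]; simpa [hc] using hl1
    have hrc : reducedClaims c lam
        = fun k : Fin 2 => 1 + if (k : ℕ) = 0 then 1 - lam else 0 := by
      funext k
      simp [reducedClaims, hc]
    have hrcsum : ∑ k, reducedClaims c lam k = 3 - lam := by
      rw [hrc]; simp [Fin.sum_univ_two]; ring
    have h3 : (0 : ℝ) < 3 - lam := by linarith
    have hprob : IsProblem (reducedClaims c (avgAlloc lam 3 c 3 0))
        (3 - avgAlloc lam 3 c 3 0) := by
      rw [hphi0]
      refine ⟨fun i => ?_, ?_, by linarith, le_of_eq hrcsum.symm⟩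
      · rw [hrc]
        rcases eq_or_ne (i : ℕ) 0 with h | h <;> simp [h] <;> linarith
      · rw [hrcsum]; exact h3
    have key := hTC 1 c 3 hred hle hprob 0
    rw [hphi0] at key
    have key' : avgAlloc lam 3 c 3 ((0 : Fin 2).succ)
        = avgAlloc lam 2 (reducedClaims c lam) (3 - lam) 0 := key
    have hL : avgAlloc lam 3 c 3 (0 : Fin 2).succ = lam := by
      simp [avgAlloc, propAlloc, ftAlloc, hc, Fin.sum_univ_three]
    have hR : avgAlloc lam 2 (reducedClaims c lam) (3 - lam) 0 = lam * (2 - lam) := by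
      simp only [avgAlloc, propAlloc, ftAlloc]
      rw [hrcsum, div_self (ne_of_gt h3)]
      have h00 : reducedClaims c lam 0 = 2 - lam := by
        rw [hrc]; norm_num; ring
      rw [h00]
      norm_num
    rw [hL, hR] at key'
    replace key := key'
    have hq : lam * (1 - lam) = 0 := by linear_combination -key
    rcases mul_eq_zero.mp hq with h | h
    · exact h0 h
    · exact h1 (by linarith)
  · rintro (rfl | rfl)
    · -- lam = 0 : full transfer rule
      intro n c E hred hle hprob k
      have hphi0 : avgAlloc 0 (n + 2) c E 0 = 0 := by
        simp [avgAlloc, propAlloc, ftAlloc]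
      rw [hphi0]
      simp only [avgAlloc, propAlloc, ftAlloc, sub_zero, zero_mul, zero_add, one_mul,
        mul_zero, zero_sub]
      have hk : ((k.succ : Fin (n+2)) : ℕ) = (k : ℕ) + 1 := rfl
      rw [hk]
      have heq : ((k : ℕ) + 1 = n + 2 - 1) ↔ ((k : ℕ) = n + 1 - 1) := by omega
      simp only [heq]
    · -- lam = 1 : proportional rule
      intro n c E hred hle hprob k
      obtain ⟨⟨hnn, hpos, hE0, hEle⟩, hEeq⟩ := hred
      have hratio : E / ∑ j, c j = 1 := by
        rw [hEeq]; exact div_self (ne_of_gt hpos)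
      have hphi0 : avgAlloc 1 (n + 2) c E 0 = c 0 := by
        simp [avgAlloc, propAlloc, ftAlloc, hratio]
      rw [hphi0] at hprob ⊢
      obtain ⟨hnn', hpos', hE0', hEle'⟩ := hprob
      have hsum' : ∑ j, reducedClaims c (c 0) j = E - c 0 := by
        simp only [reducedClaims]
        rw [Finset.sum_add_distrib]
        have h1 : ∑ k : Fin (n+1), c k.succ = E - c 0 := by
          conv_rhs => rw [hEeq, Fin.sum_univ_succ]
          ring
        have h2 : ∑ k : Fin (n+1), (if (k : ℕ) = 0 then c 0 - c 0 else 0) = 0 := by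
          apply Finset.sum_eq_zero
          intro x _
          split <;> simp
        rw [h1, h2]; ring
      have hratio' : (E - c 0) / ∑ j, reducedClaims c (c 0) j = 1 := by
        rw [hsum']
        refine div_self (ne_of_gt ?_)
        rw [← hsum']; exact hpos'
      simp only [avgAlloc, propAlloc, ftAlloc, hratio, hratio']
      simp [reducedClaims]
end

section
/- For every λ ∈ [0,1], the averaging rule φ^λ satisfies scale invariance, upstream invariance, equal treatment of equal single polluters, and budget additivity. -/
open Finset

/-- every averaging rule `φ^λ`, `λ ∈ [0,1]`, satisfies scale invariance,
upstream invariance, equal treatment of equal single polluters and budget additivity. -/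
theorem avg_satisfies_axioms (lam : ℝ) (hlam : lam ∈ Set.Icc (0 : ℝ) 1) :
    ScaleInvariant (avgAlloc lam) ∧ UpstreamInvariant (avgAlloc lam) ∧
      EqualTreatmentOfEqualSinglePolluters (avgAlloc lam) ∧
      BudgetAdditive (avgAlloc lam) := by
  refine ⟨?_, ?_, ?_, ?_⟩
  · -- Scale invariance
    intro n c E μ hP hμ
    obtain ⟨hc, hC, hE0, hEC⟩ := hP
    funext i
    simp only [avgAlloc, propAlloc, ftAlloc, ← Finset.mul_sum]
    have hμ' : μ ≠ 0 := ne_of_gt hμ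
    rw [mul_div_mul_left E (∑ j, c j) hμ']
    split <;> ring
  · -- Upstream invariance
    intro n c d hc hd i hci hcd k hki
    obtain ⟨⟨hc0, hCpos, _, _⟩, _⟩ := hc
    obtain ⟨⟨hd0, hDpos, _, _⟩, _⟩ := hd
    have hk : (k : ℕ) ≠ n - 1 := by
      intro h
      have : (i : ℕ) < n := i.isLt
      have : (k : ℕ) < (i : ℕ) := hki
      omega
    simp only [avgAlloc, propAlloc, ftAlloc, if_neg hk]
    rw [div_self (ne_of_gt hCpos), div_self (ne_of_gt hDpos), hcd k (by
      intro h; subst h; exact lt_irrefl _ hki)]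
  · -- Equal treatment of equal single polluters
    intro n hn E hE i j hi hj
    have hsum : ∀ m : Fin n, ∑ k, singleClaim m E k = E := by
      intro m
      simp [singleClaim, Finset.sum_ite_eq']
    have hni : (i : ℕ) ≠ n - 1 := Nat.ne_of_lt hi
    have hnj : (j : ℕ) ≠ n - 1 := Nat.ne_of_lt hj
    simp [avgAlloc, propAlloc, ftAlloc, hsum, singleClaim, hni, hnj,
      div_self (ne_of_gt hE)]
  · -- Budget additivity
    intro n c E E' E'' hP hE' hE'' hEsum
    funext i
    simp only [avgAlloc, propAlloc, ftAlloc, hEsum]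
    split <;> ring
end
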